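/- arXiv:1903.00218 — 4 statements merged into one kernel-verified Lean document; each statement's English description precedes it below -/
import Mathlib

section
/- Let w : ℝ → ℝ satisfy condition (Q): bounded, uniformly continuous, positive, liminf at -∞ positive, limit 0 at +∞, C² and nonincreasing on [ξ₀,+∞) for some ξ₀, and w''(x) = o(w(x)) as x → +∞. Then for any 0 < a < b, Γₐ > 0, Γ_b > 0 and χ > 0, there exists t* ≥ 0 such that for all t ≥ t*, min{x : w(x) = Γₐ e^{-at}} + χ ≤ min{x : w(x) = Γ_b e^{-bt}}. -/
open Filter Set Real Asymptotics Topology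

theorem stmt_1 (w : ℝ → ℝ) (ξ₀ : ℝ)
    (hbdd : ∃ M, ∀ x, |w x| ≤ M)
    (hUC : UniformContinuous w)
    (hpos : ∀ x, 0 < w x)
    (hliminf : 0 < Filter.liminf w Filter.atBot)
    (hlim : Filter.Tendsto w Filter.atTop (nhds 0))
    (hC2 : ContDiffOn ℝ 2 w (Set.Ici ξ₀))
    (hmono : AntitoneOn w (Set.Ici ξ₀))
    (hoo : (fun x => deriv (deriv w) x) =o[Filter.atTop] w) :
    ∀ a b Γa Γb χ : ℝ, 0 < a → a < b → 0 < Γa → 0 < Γb → 0 < χ →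
      ∃ tstar : ℝ, 0 ≤ tstar ∧ ∀ t ≥ tstar,
        sInf {x : ℝ | w x = Γa * Real.exp (-a * t)} + χ ≤
          sInf {x : ℝ | w x = Γb * Real.exp (-b * t)} := by
  intro a b Γa Γb χ ha hab hΓa hΓb hχ
  have hcont : Continuous w := hUC.continuous
  have hC2' : ContDiffOn ℝ 2 w (Set.Ioi ξ₀) := hC2.mono Set.Ioi_subset_Ici_self
  have hd1 : ∀ y ∈ Set.Ioi ξ₀, DifferentiableAt ℝ w y := fun y hy =>
    (hC2'.differentiableOn (by norm_num)).differentiableAt (isOpen_Ioi.mem_nhds hy)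
  have hd2 : ∀ y ∈ Set.Ioi ξ₀, DifferentiableAt ℝ (deriv w) y := fun y hy =>
    ((hC2'.deriv_of_isOpen (m := 1) isOpen_Ioi (by norm_num)).differentiableOn
      (by norm_num)).differentiableAt (isOpen_Ioi.mem_nhds hy)
  set ε : ℝ := (40 * χ ^ 2)⁻¹ with hεdef
  have hε : 0 < ε := by positivity
  have hεχ : ε * (40 * χ ^ 2) = 1 := by
    rw [hεdef]; field_simp
  -- threshold for the o-condition
  obtain ⟨ξ₁', hξ₁'⟩ := eventually_atTop.mp (hoo.def hε)
  set ξ₁ : ℝ := max ξ₁' (ξ₀ + 1) with hξ₁def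
  have hξ₁₀ : ξ₀ < ξ₁ := lt_of_lt_of_le (by linarith) (le_max_right _ _)
  have hdd : ∀ y, ξ₁ ≤ y → |deriv (deriv w) y| ≤ ε * w y := by
    intro y hy
    have h := hξ₁' y (le_trans (le_max_left _ _) hy)
    rwa [Real.norm_eq_abs, Real.norm_eq_abs, abs_of_pos (hpos y)] at h
  set T : ℝ := 8 * χ with hTdef
  have hT : 0 < T := by positivity
  -- Key lemma: w decays by at most a factor 4 over an interval of length χ
  have key : ∀ x, ξ₁ ≤ x → w x / 4 ≤ w (x + χ) := by
    intro x hx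
    have hx0 : ξ₀ < x := lt_of_lt_of_le hξ₁₀ hx
    have hsub : Set.Icc x (x + T) ⊆ Set.Ioi ξ₀ := fun y hy => lt_of_lt_of_le hx0 hy.1
    have hwx : 0 < w x := hpos x
    -- bound on the oscillation of deriv w
    have hB : ∀ y ∈ Set.Icc x (x + T), ‖deriv w y - deriv w x‖ ≤ ε * w x * (y - x) := by
      apply norm_image_sub_le_of_norm_deriv_le_segment'
        (f' := fun y => deriv (deriv w) y)
        (fun y hy => (hd2 y (hsub hy)).hasDerivAt.hasDerivWithinAt)
      intro y hy
      have h1 : |deriv (deriv w) y| ≤ ε * w y := hdd y (le_trans hx hy.1)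
      have h2 : w y ≤ w x :=
        hmono (show x ∈ Set.Ici ξ₀ from hx0.le) (show y ∈ Set.Ici ξ₀ from (Set.mem_Ioi.mp (hsub ⟨hy.1, hy.2.le⟩)).le) hy.1
      rw [Real.norm_eq_abs]
      nlinarith
    -- oscillation of w around its linearization
    have hg : ∀ y ∈ Set.Icc x (x + T),
        HasDerivWithinAt (fun y => w y - y * deriv w x) (deriv w y - deriv w x)
          (Set.Icc x (x + T)) y := fun y hy =>
      ((hd1 y (hsub hy)).hasDerivAt.sub (hasDerivAt_mul_const (deriv w x))).hasDerivWithinAt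
    have hC : ∀ y ∈ Set.Ico x (x + T), ‖deriv w y - deriv w x‖ ≤ ε * w x * T := by
      intro y hy
      refine (hB y ⟨hy.1, hy.2.le⟩).trans ?_
      have h1 : y - x ≤ T := by linarith [hy.2]
      exact mul_le_mul_of_nonneg_left h1 (by positivity)
    have hseg := norm_image_sub_le_of_norm_deriv_le_segment' hg hC
    have e1 := hseg (x + T) ⟨by linarith, le_rfl⟩
    have e2 := hseg (x + χ) ⟨by linarith, by rw [hTdef]; linarith⟩
    rw [Real.norm_eq_abs, abs_le] at e1 e2
    have hwT : 0 < w (x + T) := hpos _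
    obtain ⟨e1l, e1r⟩ := e1
    obtain ⟨e2l, e2r⟩ := e2
    -- from e1r and w(x+T) > 0: lower bound on deriv w x
    -- e1r : (w (x+T) - (x+T) * D) - (w x - x * D) ≤ ε * w x * T * (x + T - x)
    -- e2l : -(ε * w x * T * χ) ≤ (w (x+χ) - (x+χ) * D) - (w x - x * D)
    have hT2 : ε * w x * T * T = (8 / 5) * w x := by
      rw [hTdef]; nlinarith [hεχ]
    have hTχ : ε * w x * T * χ = (1 / 5) * w x := by
      rw [hTdef]; nlinarith [hεχ]
    nlinarith [mul_pos hχ hwx]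
  -- lower bound m for w on (-∞, ξ₁]
  obtain ⟨A, hA⟩ : ∃ A, ∀ x ≤ A, liminf w atBot / 2 < w x := by
    have hbd : IsBoundedUnder (· ≥ ·) atBot w := ⟨0, by
      simp only [eventually_map]
      exact Eventually.of_forall fun x => (hpos x).le⟩
    exact eventually_atBot.mp
      (eventually_lt_of_lt_liminf (by linarith : liminf w atBot / 2 < liminf w atBot) hbd)
  set A' : ℝ := min A ξ₁ with hA'def
  obtain ⟨c, hc, hcmin⟩ :=
    isCompact_Icc.exists_isMinOn ⟨ξ₁, ⟨min_le_right _ _, le_rfl⟩⟩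
      (hcont.continuousOn (s := Set.Icc A' ξ₁))
  set m : ℝ := min (liminf w atBot / 2) (w c) with hmdef
  have hm0 : 0 < m := lt_min (by linarith) (hpos c)
  have hmle : ∀ x, x ≤ ξ₁ → m ≤ w x := by
    intro x hx
    rcases le_or_gt x A' with h | h
    · exact le_trans (min_le_left _ _) (hA x (le_trans h (min_le_left _ _))).le
    · exact le_trans (min_le_right _ _) (hcmin ⟨h.le, hx⟩)
  -- minimum of level sets
  have level : ∀ η : ℝ, 0 < η → η < m →
      w (sInf {x | w x = η}) = η ∧ ξ₁ ≤ sInf {x | w x = η} := by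
    intro η hη hηm
    have hS : IsClosed {x | w x = η} := isClosed_eq hcont continuous_const
    have hlb : ∀ x ∈ {x | w x = η}, ξ₁ ≤ x := by
      intro x hx
      by_contra h
      push_neg at h
      have := hmle x h.le
      rw [Set.mem_setOf_eq] at hx
      linarith [hx ▸ this]
    obtain ⟨X, hX⟩ := ((hlim.eventually_lt_const hη).and (eventually_ge_atTop ξ₁)).exists
    have hne : {x | w x = η}.Nonempty := by
      have hmem : η ∈ Set.Icc (w X) (w ξ₁) :=
        ⟨hX.1.le, le_trans hηm.le (hmle ξ₁ le_rfl)⟩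
      obtain ⟨c', _, hwc'⟩ := intermediate_value_Icc' hX.2 hcont.continuousOn hmem
      exact ⟨c', hwc'⟩
    have hbdd : BddBelow {x | w x = η} := ⟨ξ₁, hlb⟩
    exact ⟨hS.csInf_mem hne hbdd, le_csInf hne hlb⟩
  -- thresholds in t
  have tend : ∀ c Γ : ℝ, 0 < c → Tendsto (fun t => Γ * Real.exp (-c * t)) atTop (𝓝 0) := by
    intro c Γ hc
    have h1 : Tendsto (fun t : ℝ => -c * t) atTop atBot :=
      (tendsto_const_mul_atBot_of_neg (by linarith)).mpr tendsto_id
    have h2 : Tendsto (fun t : ℝ => Real.exp (-c * t)) atTop (𝓝 0) :=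
      Real.tendsto_exp_comp_nhds_zero.mpr h1
    simpa using h2.const_mul Γ
  have h1 := (tend a Γa ha).eventually_lt_const hm0
  have h2 := (tend b Γb (by linarith)).eventually_lt_const hm0
  have h3 := (tend (b - a) (4 * Γb / Γa) (by linarith)).eventually_lt_const (one_pos)
  obtain ⟨N, hN⟩ := eventually_atTop.mp ((h1.and h2).and h3)
  refine ⟨max N 0, le_max_right _ _, ?_⟩
  intro t ht
  obtain ⟨⟨H1, H2⟩, H3⟩ := hN t (le_trans (le_max_left _ _) ht)
  have hηa : (0 : ℝ) < Γa * Real.exp (-a * t) := by positivity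
  have hηb : (0 : ℝ) < Γb * Real.exp (-b * t) := by positivity
  obtain ⟨hma, hxa⟩ := level (Γa * Real.exp (-a * t)) hηa H1
  obtain ⟨hmb, hxb⟩ := level (Γb * Real.exp (-b * t)) hηb H2
  set xa := sInf {x | w x = Γa * Real.exp (-a * t)} with hxadef
  set xb := sInf {x | w x = Γb * Real.exp (-b * t)} with hxbdef
  have hratio : Γb * Real.exp (-b * t) < Γa * Real.exp (-a * t) / 4 := by
    have hexp : Real.exp (-b * t) = Real.exp (-(b - a) * t) * Real.exp (-a * t) := by
      rw [← Real.exp_add]; ring_nf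
    have hea : (0 : ℝ) < Real.exp (-a * t) := Real.exp_pos _
    have heb : (0 : ℝ) < Real.exp (-(b - a) * t) := Real.exp_pos _
    rw [hexp]
    have H3' : 4 * Γb * Real.exp (-(b - a) * t) < Γa := by
      rw [div_mul_eq_mul_div, div_lt_one hΓa] at H3
      linarith
    linarith [mul_lt_mul_of_pos_right H3' hea]
  have hw4 : Γa * Real.exp (-a * t) / 4 ≤ w (xa + χ) := by
    have h := key xa hxa
    rw [hma] at h
    exact h
  have hlt : w xb < w (xa + χ) := by
    rw [hmb]
    exact lt_of_lt_of_le hratio hw4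
  by_contra hcon
  push_neg at hcon
  have hmm : w (xa + χ) ≤ w xb :=
    hmono (show xb ∈ Set.Ici ξ₀ from le_trans hξ₁₀.le hxb)
      (show xa + χ ∈ Set.Ici ξ₀ from by
        have := le_trans hξ₁₀.le hxa; simp only [Set.mem_Ici]; linarith)
      hcon.le
  linarith
end

section
/- Let w : ℝ → ℝ satisfy condition (Q). Then w'(x) = o(w(x)) as x → +∞, and consequently w has a heavy tail at +∞: for every ε > 0, w(x)·e^{εx} → +∞ as x → +∞. -/
open Filter Set Asymptotics

theorem stmt_2 (w : ℝ → ℝ) (ξ₀ : ℝ)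
    (hbdd : ∃ M, ∀ x, |w x| ≤ M)
    (hUC : UniformContinuous w)
    (hpos : ∀ x, 0 < w x)
    (hliminf : 0 < Filter.liminf w Filter.atBot)
    (hlim : Filter.Tendsto w Filter.atTop (nhds 0))
    (hC2 : ContDiffOn ℝ 2 w (Set.Ici ξ₀))
    (hmono : AntitoneOn w (Set.Ici ξ₀))
    (hoo : (fun x => deriv (deriv w) x) =o[Filter.atTop] w) :
    (fun x => deriv w x) =o[Filter.atTop] w ∧
      ∀ ε > (0 : ℝ), Filter.Tendsto (fun x => w x * Real.exp (ε * x))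
        Filter.atTop Filter.atTop := by
  have hC2' : ContDiffOn ℝ 2 w (Set.Ioi ξ₀) := hC2.mono Ioi_subset_Ici_self
  have hCA : ∀ x, ξ₀ < x → ContDiffAt ℝ 2 w x := fun x hx =>
    hC2.contDiffAt (Ici_mem_nhds hx)
  have hdiff : ∀ x, ξ₀ < x → DifferentiableAt ℝ w x := fun x hx =>
    (hCA x hx).differentiableAt (by norm_num)
  have hC1d : ContDiffOn ℝ 1 (deriv w) (Set.Ioi ξ₀) :=
    hC2'.deriv_of_isOpen isOpen_Ioi (by norm_num)
  have hd2 : ∀ x, ξ₀ < x → HasDerivAt (deriv w) (deriv (deriv w) x) x := by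
    intro x hx
    have : DifferentiableAt ℝ (deriv w) x :=
      (hC1d.contDiffAt (Ioi_mem_nhds hx)).differentiableAt (by norm_num)
    exact this.hasDerivAt
  have hanti : ∀ x y : ℝ, ξ₀ ≤ x → x ≤ y → w y ≤ w x := fun x y hx hxy =>
    hmono hx (le_trans hx hxy) hxy
  have key : (fun x => deriv w x) =o[Filter.atTop] w := by
    rw [Asymptotics.isLittleO_iff]
    intro c hc
    have hδ : (0 : ℝ) < c ^ 2 / 4 := by positivity
    obtain ⟨a₀, ha₀⟩ := Filter.eventually_atTop.mp (hoo.def hδ)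
    set h : ℝ := 2 / c with hh
    have hh0 : 0 < h := by positivity
    filter_upwards [Filter.eventually_ge_atTop a₀, Filter.eventually_gt_atTop ξ₀]
      with x hxa hxξ
    have hxx : x < x + h := by linarith
    -- points of [x, x+h] are > ξ₀ and ≥ a₀
    have hsub : Set.Icc x (x + h) ⊆ Set.Ioi ξ₀ := fun y hy => lt_of_lt_of_le hxξ hy.1
    have hcont : ContinuousOn w (Set.Icc x (x + h)) := fun y hy =>
      (hdiff y (hsub hy)).continuousAt.continuousWithinAt
    obtain ⟨ξ, hξ, hslope⟩ := exists_deriv_eq_slope w hxx hcont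
      (fun y hy => (hdiff y (lt_of_lt_of_le hxξ (le_of_lt hy.1))).differentiableWithinAt)
    -- bound on deriv w ξ
    have hwle : w (x + h) ≤ w x := hanti x (x + h) hxξ.le (by linarith)
    have hξbd : |deriv w ξ| ≤ w x / h := by
      rw [hslope, show x + h - x = h by ring, abs_div, abs_of_pos hh0]
      gcongr
      rw [abs_sub_comm, abs_of_nonneg (by linarith)]
      linarith [hpos (x + h)]
    -- bound on deriv w x - deriv w ξ via w''
    have hbound : ∀ y ∈ Set.Icc x (x + h),
        HasDerivWithinAt (deriv w) (deriv (deriv w) y) (Set.Icc x (x + h)) y :=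
      fun y hy => (hd2 y (hsub hy)).hasDerivWithinAt
    have hC : ∀ y ∈ Set.Icc x (x + h), ‖deriv (deriv w) y‖ ≤ c ^ 2 / 4 * w x := by
      intro y hy
      have h1 : ‖deriv (deriv w) y‖ ≤ c ^ 2 / 4 * ‖w y‖ := ha₀ y (le_trans hxa hy.1)
      have h2 : w y ≤ w x := hanti x y hxξ.le hy.1
      have h3 : ‖w y‖ = w y := abs_of_pos (hpos y)
      rw [h3] at h1
      nlinarith [hpos y]
    have hdiffbd : ‖deriv w ξ - deriv w x‖ ≤ c ^ 2 / 4 * w x * ‖ξ - x‖ :=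
      (convex_Icc x (x + h)).norm_image_sub_le_of_norm_hasDerivWithin_le hbound hC
        (Set.left_mem_Icc.2 hxx.le) (Set.mem_Icc_of_Ioo hξ)
    have hξx : ‖ξ - x‖ ≤ h := by
      rw [Real.norm_eq_abs, abs_of_nonneg (by linarith [hξ.1] : (0:ℝ) ≤ ξ - x)]
      linarith [hξ.2]
    have hwpos := hpos x
    have step : ‖deriv w x‖ ≤ w x / h + c ^ 2 / 4 * w x * h := by
      have := norm_sub_norm_le (deriv w ξ) (deriv w x)
      have h4 : ‖deriv w x‖ ≤ ‖deriv w ξ‖ + ‖deriv w ξ - deriv w x‖ := by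
        simpa using norm_sub_le (deriv w ξ) (deriv w ξ - deriv w x)
      calc ‖deriv w x‖ ≤ ‖deriv w ξ‖ + ‖deriv w ξ - deriv w x‖ := h4
        _ ≤ w x / h + c ^ 2 / 4 * w x * ‖ξ - x‖ := add_le_add hξbd hdiffbd
        _ ≤ w x / h + c ^ 2 / 4 * w x * h := by
            have hnn : (0:ℝ) ≤ c ^ 2 / 4 * w x := mul_nonneg hδ.le hwpos.le
            nlinarith [hξx]
    have : w x / h + c ^ 2 / 4 * w x * h = c * w x := by
      rw [hh]; field_simp; ring
    rw [this] at step
    rwa [Real.norm_eq_abs (w x), abs_of_pos hwpos]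
  refine ⟨key, ?_⟩
  intro ε hε
  obtain ⟨a₀, ha₀⟩ := Filter.eventually_atTop.mp (key.def (half_pos hε))
  set a : ℝ := max a₀ (ξ₀ + 1) with ha
  have haξ : ξ₀ < a := lt_of_lt_of_le (by linarith) (le_max_right _ _)
  set g : ℝ → ℝ := fun x => Real.log (w x) + ε * x with hg
  have hgd : ∀ y, ξ₀ < y → HasDerivAt g (deriv w y / w y + ε) y := by
    intro y hy
    have h1 : HasDerivAt (fun x => Real.log (w x)) (deriv w y / w y) y :=
      (hdiff y hy).hasDerivAt.log (hpos y).ne'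
    have h2 : HasDerivAt (fun x => ε * x) ε y := by
      simpa using (hasDerivAt_id y).const_mul ε
    exact h1.add h2
  have hlb : ∀ y, a ≤ y → ε / 2 ≤ deriv w y / w y + ε := by
    intro y hy
    have h1 : |deriv w y| ≤ ε / 2 * |w y| := ha₀ y (le_trans (le_max_left _ _) hy)
    have h2 : 0 < w y := hpos y
    rw [abs_of_pos h2] at h1
    have h3 : -(ε / 2 * w y) ≤ deriv w y := neg_le_of_abs_le h1
    have h4 : -(ε / 2) ≤ deriv w y / w y := by
      rw [le_div_iff₀ h2]; linarith
    linarith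
  have hglb : ∀ᶠ x in Filter.atTop, g a + ε / 2 * (x - a) ≤ g x := by
    filter_upwards [Filter.eventually_gt_atTop a] with x hx
    have hcont : ContinuousOn g (Set.Icc a x) := fun y hy =>
      (hgd y (lt_of_lt_of_le haξ hy.1)).continuousAt.continuousWithinAt
    obtain ⟨ξ, hξ, hslope⟩ := exists_hasDerivAt_eq_slope g
      (fun y => deriv w y / w y + ε) hx hcont
      (fun y hy => hgd y (lt_of_lt_of_le haξ hy.1.le))
    have := hlb ξ hξ.1.le
    rw [hslope] at this
    have hxa : 0 < x - a := by linarith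
    rw [le_div_iff₀ hxa] at this
    linarith
  have hgtop : Filter.Tendsto g Filter.atTop Filter.atTop := by
    apply Filter.tendsto_atTop_mono' _ hglb
    apply Filter.tendsto_atTop_add_const_left
    exact (tendsto_atTop_add_const_right _ _ Filter.tendsto_id).const_mul_atTop (half_pos hε)
  have : Filter.Tendsto (fun x => Real.exp (g x)) Filter.atTop Filter.atTop :=
    Real.tendsto_exp_atTop.comp hgtop
  refine this.congr fun x => ?_
  rw [hg, Real.exp_add, Real.exp_log (hpos x)]
end

section
/- Let r̃ : ℝ → ℝ be locally bounded, bounded above, and confining: for all δ > 0 there exists R > 0 such that r̃(Y) ≤ −δ for a.e. |Y| ≥ R. Let Γ₀ ∈ C²(ℝ), Γ₀ > 0, bounded, satisfy −Γ₀'' − r̃ Γ₀ = λ₀ Γ₀ on ℝ for some λ₀ ∈ ℝ. Then Γ₀ decays at least exponentially: there exist a, C, Y₀ > 0 such that Γ₀(Y) ≤ C e^{−a|Y|} for all |Y| ≥ Y₀. -/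
open Real Set

lemma exp_decay_right (f : ℝ → ℝ) (M R : ℝ)
    (hC2 : ContDiff ℝ 2 f) (hpos : ∀ Y, 0 < f Y) (hbd : ∀ Y, f Y ≤ M)
    (hineq : ∀ Y, R ≤ Y → f Y ≤ deriv (deriv f) Y) :
    ∀ Y, R ≤ Y → f Y ≤ f R * Real.exp (R - Y) := by
  have hd1 : Differentiable ℝ f := hC2.differentiable two_ne_zero
  have hd2 : Differentiable ℝ (deriv f) := by
    have h2 : ContDiff ℝ ((1:WithTop ℕ∞)+1) f := by convert hC2 using 1; norm_num
    exact (contDiff_succ_iff_deriv.mp h2).2.2.differentiable one_ne_zero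
  set g : ℝ → ℝ := fun Y => deriv f Y + f Y with hg_def
  have hgd : ∀ Y, HasDerivAt g (deriv (deriv f) Y + deriv f Y) Y := fun Y =>
    ((hd2 Y).hasDerivAt).add ((hd1 Y).hasDerivAt)
  have hgc : Continuous g := hd2.continuous.add hd1.continuous
  -- Step A : g ≤ 0 on [R, ∞)
  have hgle : ∀ Y, R ≤ Y → g Y ≤ 0 := by
    by_contra h
    push_neg at h
    obtain ⟨Y₁, hY₁R, hc⟩ := h
    set c' : ℝ := Real.exp (-Y₁) * g Y₁ with hc'def
    have hc' : 0 < c' := mul_pos (Real.exp_pos _) hc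
    -- φ = exp(-Y) g Y is monotone on [Y₁,∞)
    have hφd : ∀ Y, HasDerivAt (fun Y => Real.exp (-Y) * g Y)
        (Real.exp (-Y) * (deriv (deriv f) Y - f Y)) Y := by
      intro Y
      have h1 : HasDerivAt (fun Y : ℝ => Real.exp (-Y)) (-Real.exp (-Y)) Y := by
        simpa using (hasDerivAt_neg Y).exp
      have := h1.fun_mul (hgd Y)
      refine this.congr_deriv ?_
      simp only [hg_def]
      ring
    have hφmono : MonotoneOn (fun Y => Real.exp (-Y) * g Y) (Ici Y₁) := by
      apply monotoneOn_of_deriv_nonneg (convex_Ici Y₁)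
      · exact ((Real.continuous_exp.comp continuous_neg).mul hgc).continuousOn
      · exact fun x _ => ((hφd x).differentiableAt).differentiableWithinAt
      · intro x hx
        rw [interior_Ici] at hx
        rw [(hφd x).deriv]
        have hxR : R ≤ x := le_trans hY₁R (le_of_lt hx)
        exact mul_nonneg (Real.exp_pos _).le (by linarith [hineq x hxR])
    have hglb : ∀ Y, Y₁ ≤ Y → c' * Real.exp Y ≤ g Y := by
      intro Y hY
      have h0 : Real.exp (-Y₁) * g Y₁ ≤ Real.exp (-Y) * g Y :=
        hφmono self_mem_Ici (mem_Ici.mpr hY) hY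
      have h2 : Real.exp (-Y) * Real.exp Y = 1 := by
        rw [← Real.exp_add]; simp
      calc c' * Real.exp Y = (Real.exp (-Y₁) * g Y₁) * Real.exp Y := by rw [hc'def]
        _ ≤ (Real.exp (-Y) * g Y) * Real.exp Y :=
            mul_le_mul_of_nonneg_right h0 (Real.exp_pos Y).le
        _ = (Real.exp (-Y) * Real.exp Y) * g Y := by ring
        _ = g Y := by rw [h2, one_mul]
    -- ψ = exp Y * f Y - c'/2 * exp (2Y) is monotone on [Y₁,∞)
    have hψd : ∀ Y, HasDerivAt (fun Y => Real.exp Y * f Y - c'/2 * Real.exp (2*Y))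
        (Real.exp Y * g Y - c' * Real.exp (2*Y)) Y := by
      intro Y
      have h2 : HasDerivAt (fun Y => Real.exp Y * f Y)
          (Real.exp Y * f Y + Real.exp Y * deriv f Y) Y :=
        (Real.hasDerivAt_exp Y).mul (hd1 Y).hasDerivAt
      have hlin : HasDerivAt (fun Y : ℝ => 2*Y) 2 Y := by
        simpa using (hasDerivAt_id Y).const_mul 2
      have h3 : HasDerivAt (fun Y : ℝ => Real.exp (2*Y)) (Real.exp (2*Y) * 2) Y := hlin.exp
      have := h2.fun_sub (h3.const_mul (c'/2))
      refine this.congr_deriv ?_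
      simp only [hg_def]
      ring
    have hψmono : MonotoneOn (fun Y => Real.exp Y * f Y - c'/2 * Real.exp (2*Y)) (Ici Y₁) := by
      apply monotoneOn_of_deriv_nonneg (convex_Ici Y₁)
      · exact ((Real.continuous_exp.mul hd1.continuous).sub
          (continuous_const.mul (Real.continuous_exp.comp (continuous_const.mul continuous_id)))).continuousOn
      · exact fun x _ => ((hψd x).differentiableAt).differentiableWithinAt
      · intro x hx
        rw [interior_Ici] at hx
        rw [(hψd x).deriv]
        have h4 := hglb x (le_of_lt hx)
        have h5 : Real.exp x * Real.exp x = Real.exp (2*x) := by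
          rw [← Real.exp_add]; ring_nf
        nlinarith [Real.exp_pos x]
    set K : ℝ := Real.exp Y₁ * f Y₁ - c'/2 * Real.exp (2*Y₁) with hKdef
    -- contradiction at a large point
    set Yb : ℝ := max (max Y₁ 0) (Real.log (2*(M + |K| + 1)/c')) with hYb
    have hYbY₁ : Y₁ ≤ Yb := le_trans (le_max_left _ _) (le_max_left _ _)
    have hYb0 : (0:ℝ) ≤ Yb := le_trans (le_max_right _ _) (le_max_left _ _)
    have hM : 0 < M := lt_of_lt_of_le (hpos Y₁) (hbd Y₁)
    have hargpos : 0 < 2*(M + |K| + 1)/c' := by positivity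
    have hEYb : 2*(M + |K| + 1)/c' ≤ Real.exp Yb := by
      calc 2*(M + |K| + 1)/c' = Real.exp (Real.log (2*(M + |K| + 1)/c')) :=
            (Real.exp_log hargpos).symm
        _ ≤ Real.exp Yb := Real.exp_le_exp.mpr (le_max_right _ _)
    have hE1 : (1:ℝ) ≤ Real.exp Yb := by
      rw [← Real.exp_zero]; exact Real.exp_le_exp.mpr hYb0
    have hK2 : K ≤ Real.exp Yb * f Yb - c'/2 * Real.exp (2*Yb) :=
      hψmono self_mem_Ici (mem_Ici.mpr hYbY₁) hYbY₁
    have h5 : Real.exp Yb * Real.exp Yb = Real.exp (2*Yb) := by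
      rw [← Real.exp_add]; ring_nf
    rw [← h5] at hK2
    have hcE : 2*(M + |K| + 1) ≤ c' * Real.exp Yb := by
      rw [div_le_iff₀ hc'] at hEYb
      linarith [mul_comm c' (Real.exp Yb), hEYb]
    have e1 : (M + |K| + 1) * Real.exp Yb ≤ c'/2 * (Real.exp Yb * Real.exp Yb) := by
      nlinarith [mul_le_mul_of_nonneg_right hcE (Real.exp_pos Yb).le]
    have e2 : Real.exp Yb * f Yb ≤ M * Real.exp Yb := by
      nlinarith [hbd Yb, Real.exp_pos Yb]
    have e3 : |K| * 1 ≤ |K| * Real.exp Yb := mul_le_mul_of_nonneg_left hE1 (abs_nonneg K)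
    have habs : -|K| ≤ K := neg_abs_le K
    clear_value c' K Yb
    linarith [hK2, e1, e2, e3, habs, hE1]
  -- Step B : exp Y * f Y is antitone on [R,∞)
  have hχd : ∀ Y, HasDerivAt (fun Y => Real.exp Y * f Y) (Real.exp Y * g Y) Y := by
    intro Y
    have := (Real.hasDerivAt_exp Y).fun_mul (hd1 Y).hasDerivAt
    refine this.congr_deriv ?_
    simp only [hg_def]
    ring
  have hanti : AntitoneOn (fun Y => Real.exp Y * f Y) (Ici R) := by
    apply antitoneOn_of_deriv_nonpos (convex_Ici R)
    · exact (Real.continuous_exp.mul hd1.continuous).continuousOn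
    · exact fun x _ => ((hχd x).differentiableAt).differentiableWithinAt
    · intro x hx
      rw [interior_Ici] at hx
      rw [(hχd x).deriv]
      exact mul_nonpos_of_nonneg_of_nonpos (Real.exp_pos x).le (hgle x (le_of_lt hx))
  intro Y hY
  have h6 : Real.exp Y * f Y ≤ Real.exp R * f R := hanti self_mem_Ici (mem_Ici.mpr hY) hY
  rw [Real.exp_sub, mul_div_assoc' (f R), le_div_iff₀ (Real.exp_pos Y)]
  calc f Y * Real.exp Y = Real.exp Y * f Y := mul_comm _ _
    _ ≤ Real.exp R * f R := h6
    _ = f R * Real.exp R := mul_comm _ _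

theorem stmt_4 (rt : ℝ → ℝ) (rmax : ℝ) (Γ₀ : ℝ → ℝ) (lam₀ : ℝ)
    (hrb : ∀ Y, rt Y ≤ rmax)
    (hconf : ∀ δ > (0 : ℝ), ∃ R > (0 : ℝ), ∀ Y : ℝ, R ≤ |Y| → rt Y ≤ -δ)
    (hC2 : ContDiff ℝ 2 Γ₀)
    (hpos : ∀ Y, 0 < Γ₀ Y)
    (hbdd : ∃ M, ∀ Y, Γ₀ Y ≤ M)
    (heq : ∀ Y, -(deriv (deriv Γ₀) Y) - rt Y * Γ₀ Y = lam₀ * Γ₀ Y) :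
    ∃ a > (0 : ℝ), ∃ C > (0 : ℝ), ∃ Y₀ > (0 : ℝ),
      ∀ Y : ℝ, Y₀ ≤ |Y| → Γ₀ Y ≤ C * Real.exp (-a * |Y|) := by
  obtain ⟨M, hM⟩ := hbdd
  obtain ⟨R, hRpos, hRconf⟩ := hconf (|lam₀| + 1) (by positivity)
  set Y₀ : ℝ := max R 1 with hY₀def
  have hY₀pos : (0:ℝ) < Y₀ := lt_of_lt_of_le one_pos (le_max_right _ _)
  have hRY₀ : R ≤ Y₀ := le_max_left _ _
  -- the differential inequality for |Y| ≥ R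
  have hkey : ∀ Y : ℝ, R ≤ |Y| → Γ₀ Y ≤ deriv (deriv Γ₀) Y := by
    intro Y hY
    have h1 := heq Y
    have h2 := hRconf Y hY
    have h3 := hpos Y
    have h4 : -(rt Y + lam₀) ≥ 1 := by
      have := le_abs_self lam₀
      linarith
    nlinarith
  -- right side
  have hright := exp_decay_right Γ₀ M Y₀ hC2 hpos hM (fun Y hY => by
    apply hkey
    rw [abs_of_nonneg (le_trans hY₀pos.le hY)]
    exact le_trans hRY₀ hY)
  -- left side
  set ΓL : ℝ → ℝ := fun Y => Γ₀ (-Y) with hΓL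
  have hC2L : ContDiff ℝ 2 ΓL := hC2.comp contDiff_neg
  have hderivL : ∀ Y, deriv (deriv ΓL) Y = deriv (deriv Γ₀) (-Y) := by
    intro Y
    have h1 : deriv ΓL = fun Y => -deriv Γ₀ (-Y) := funext fun Y => deriv_comp_neg Γ₀ Y
    rw [h1]
    have h2 : deriv (fun Y : ℝ => -deriv Γ₀ (-Y)) Y
        = -(deriv (fun Y : ℝ => deriv Γ₀ (-Y)) Y) := deriv.neg
    rw [h2, deriv_comp_neg (deriv Γ₀) Y, neg_neg]
  have hleft := exp_decay_right ΓL M Y₀ hC2L (fun Y => hpos (-Y)) (fun Y => hM (-Y))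
    (fun Y hY => by
      rw [hderivL]
      apply hkey
      rw [abs_neg, abs_of_nonneg (le_trans hY₀pos.le hY)]
      exact le_trans hRY₀ hY)
  -- assemble
  refine ⟨1, one_pos, max (Γ₀ Y₀) (Γ₀ (-Y₀)) * Real.exp Y₀, ?_, Y₀, hY₀pos, ?_⟩
  · have := hpos Y₀
    have := le_max_left (Γ₀ Y₀) (Γ₀ (-Y₀))
    positivity
  intro Y hY
  rcases le_or_gt 0 Y with h0 | h0
  · rw [abs_of_nonneg h0] at hY ⊢
    have h6 := hright Y hY
    calc Γ₀ Y ≤ Γ₀ Y₀ * Real.exp (Y₀ - Y) := h6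
      _ = Γ₀ Y₀ * (Real.exp Y₀ * Real.exp (-Y)) := by
          rw [← Real.exp_add]; ring_nf
      _ ≤ max (Γ₀ Y₀) (Γ₀ (-Y₀)) * (Real.exp Y₀ * Real.exp (-Y)) := by
          apply mul_le_mul_of_nonneg_right (le_max_left _ _)
          positivity
      _ = max (Γ₀ Y₀) (Γ₀ (-Y₀)) * Real.exp Y₀ * Real.exp (-1 * Y) := by
          rw [neg_one_mul]; ring
  · rw [abs_of_neg h0] at hY ⊢
    have h6 := hleft (-Y) hY
    have h7 : ΓL (-Y) = Γ₀ Y := by rw [hΓL]; simp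
    rw [h7] at h6
    calc Γ₀ Y ≤ ΓL Y₀ * Real.exp (Y₀ - -Y) := h6
      _ = Γ₀ (-Y₀) * (Real.exp Y₀ * Real.exp (-(-Y))) := by
          rw [hΓL, ← Real.exp_add]; ring_nf
      _ ≤ max (Γ₀ Y₀) (Γ₀ (-Y₀)) * (Real.exp Y₀ * Real.exp (-(-Y))) := by
          apply mul_le_mul_of_nonneg_right (le_max_right _ _)
          positivity
      _ = max (Γ₀ Y₀) (Γ₀ (-Y₀)) * Real.exp Y₀ * Real.exp (-1 * -Y) := by
          rw [neg_one_mul]; ring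
end

section
/- Let u₀ : ℝ → ℝ satisfy condition (Q). Then there exists a function v₀ : ℝ → ℝ and ξ₂ ∈ ℝ and K ≥ 0 such that: v₀ ≤ u₀ on ℝ; v₀ = u₀ on [ξ₂, +∞); v₀ satisfies condition (Q); v₀ is C² on all of ℝ; and |v₀''(x)| ≤ K v₀(x) for all x ∈ ℝ. -/
open Filter Set

private lemma uc_mul_bdd {f g : ℝ → ℝ} (hf : UniformContinuous f) (hg : UniformContinuous g)
    {Cf Cg : ℝ} (hCf : ∀ x, |f x| ≤ Cf) (hCg : ∀ x, |g x| ≤ Cg) :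
    UniformContinuous fun x => f x * g x := by
  rw [Metric.uniformContinuous_iff] at *
  intro ε hε
  have hCf0 : 0 ≤ Cf := le_trans (abs_nonneg _) (hCf 0)
  have hCg0 : 0 ≤ Cg := le_trans (abs_nonneg _) (hCg 0)
  obtain ⟨δ₁, hδ₁, h₁⟩ := hf (ε / (2 * (Cg + 1))) (by positivity)
  obtain ⟨δ₂, hδ₂, h₂⟩ := hg (ε / (2 * (Cf + 1))) (by positivity)
  refine ⟨min δ₁ δ₂, lt_min hδ₁ hδ₂, fun {x y} hxy => ?_⟩
  have e1 := h₁ (lt_of_lt_of_le hxy (min_le_left _ _))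
  have e2 := h₂ (lt_of_lt_of_le hxy (min_le_right _ _))
  rw [Real.dist_eq] at e1 e2 ⊢
  have key : |f x * g x - f y * g y| ≤ |f x - f y| * |g x| + |f y| * |g x - g y| := by
    have : f x * g x - f y * g y = (f x - f y) * g x + f y * (g x - g y) := by ring
    rw [this]
    exact (abs_add_le _ _).trans (by rw [abs_mul, abs_mul])
  have t1 : |f x - f y| * |g x| ≤ (ε / (2 * (Cg + 1))) * Cg :=
    mul_le_mul e1.le (hCg x) (abs_nonneg _) (by positivity)
  have t2 : |f y| * |g x - g y| ≤ Cf * (ε / (2 * (Cf + 1))) :=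
    mul_le_mul (hCf y) e2.le (abs_nonneg _) hCf0
  have hd1 : (ε / (2 * (Cg + 1))) * Cg < ε / 2 := by
    rw [div_mul_eq_mul_div, div_lt_div_iff₀ (by positivity) two_pos]
    nlinarith
  have hd2 : Cf * (ε / (2 * (Cf + 1))) < ε / 2 := by
    rw [mul_div_assoc', div_lt_div_iff₀ (by positivity) two_pos]
    nlinarith
  linarith

theorem stmt_9 (u₀ : ℝ → ℝ) (ξ₀ : ℝ)
    (hbdd : ∃ M, ∀ x, |u₀ x| ≤ M)
    (hUC : UniformContinuous u₀)
    (hpos : ∀ x, 0 < u₀ x)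
    (hliminf : 0 < Filter.liminf u₀ Filter.atBot)
    (hlim : Filter.Tendsto u₀ Filter.atTop (nhds 0))
    (hC2 : ContDiffOn ℝ 2 u₀ (Set.Ici ξ₀))
    (hmono : AntitoneOn u₀ (Set.Ici ξ₀))
    (hoo : (fun x => deriv (deriv u₀) x) =o[Filter.atTop] u₀) :
    ∃ v₀ : ℝ → ℝ, ∃ ξ₂ K : ℝ, 0 ≤ K ∧
      (∀ x, v₀ x ≤ u₀ x) ∧
      (∀ x, ξ₂ ≤ x → v₀ x = u₀ x) ∧
      (∃ M, ∀ x, |v₀ x| ≤ M) ∧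
      UniformContinuous v₀ ∧
      (∀ x, 0 < v₀ x) ∧
      0 < Filter.liminf v₀ Filter.atBot ∧
      Filter.Tendsto v₀ Filter.atTop (nhds 0) ∧
      (∃ ξ₀' : ℝ, ContDiffOn ℝ 2 v₀ (Set.Ici ξ₀') ∧ AntitoneOn v₀ (Set.Ici ξ₀')) ∧
      ((fun x => deriv (deriv v₀) x) =o[Filter.atTop] v₀) ∧
      ContDiff ℝ 2 v₀ ∧
      (∀ x, |deriv (deriv v₀) x| ≤ K * v₀ x) := by
  obtain ⟨M, hM⟩ := hbdd
  -- point beyond which |u₀''| ≤ u₀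
  obtain ⟨ξ, hξ⟩ := Filter.eventually_atTop.1 (hoo.def one_pos)
  set a : ℝ := ξ₀ + 1 with ha
  set b : ℝ := max (a + 1) (ξ + 1) with hb
  have hab : a < b := lt_of_lt_of_le (by linarith) (le_max_left _ _)
  have hξb : ξ + 1 ≤ b := le_max_right _ _
  have hba : (0:ℝ) < b - a := by linarith
  -- lower bound c of u₀ on (-∞, b]
  have hMB : Filter.IsBoundedUnder (· ≥ ·) Filter.atBot u₀ :=
    ⟨-M, Filter.eventually_map.2 (Filter.Eventually.of_forall fun x => (abs_le.1 (hM x)).1)⟩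
  have hδpos : 0 < Filter.liminf u₀ Filter.atBot / 2 := by linarith
  obtain ⟨A, hA⟩ := Filter.eventually_atBot.1
    (Filter.eventually_lt_of_lt_liminf (show Filter.liminf u₀ Filter.atBot / 2 <
      Filter.liminf u₀ Filter.atBot by linarith) hMB)
  obtain ⟨z, hz, hzmin'⟩ := isCompact_Icc.exists_isMinOn
    (Set.nonempty_Icc.2 (min_le_right A b)) (hUC.continuous.continuousOn)
  have hzmin := isMinOn_iff.1 hzmin'
  set c : ℝ := min (Filter.liminf u₀ Filter.atBot / 2) (u₀ z) with hc
  have hc0 : 0 < c := lt_min hδpos (hpos z)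
  have hcb : ∀ x ≤ b, c ≤ u₀ x := by
    intro x hx
    rcases le_or_gt x (min A b) with h | h
    · exact (min_le_left _ _).trans (hA x (h.trans (min_le_left A b))).le
    · exact (min_le_right _ _).trans (hzmin x ⟨h.le, hx⟩)
  -- transition function
  set χ : ℝ → ℝ := fun x => Real.smoothTransition ((x - a) / (b - a)) with hχ
  have hχ0 : ∀ y ≤ a, χ y = 0 := fun y hy =>
    Real.smoothTransition.zero_of_nonpos (div_nonpos_iff.2 (Or.inr ⟨by linarith, by linarith⟩))
  have hχ1 : ∀ y, b ≤ y → χ y = 1 := fun y hy =>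
    Real.smoothTransition.one_of_one_le ((one_le_div hba).2 (by linarith))
  have hχnonneg : ∀ y, 0 ≤ χ y := fun y => Real.smoothTransition.nonneg _
  have hχle1 : ∀ y, χ y ≤ 1 := fun y => Real.smoothTransition.le_one _
  have hχC2 : ContDiff ℝ 2 χ := by
    have h1 : ContDiff ℝ 2 Real.smoothTransition := Real.smoothTransition.contDiff
    exact h1.comp ((contDiff_id.sub contDiff_const).div_const _)
  -- the function v
  set v : ℝ → ℝ := fun x => c + χ x * (u₀ x - c) with hv
  have hvconst : ∀ y ≤ a, v y = c := fun y hy => by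
    simp only [hv, hχ0 y hy]; ring
  have hveq : ∀ y, b ≤ y → v y = u₀ y := fun y hy => by
    simp only [hv, hχ1 y hy]; ring
  have hvpos : ∀ x, 0 < v x := by
    intro x
    have h0 := hχnonneg x; have h1 := hχle1 x
    rcases le_or_gt c (u₀ x) with h | h
    · have : 0 ≤ χ x * (u₀ x - c) := mul_nonneg h0 (by linarith)
      simp only [hv]; linarith
    · have := mul_nonneg (sub_nonneg.2 h1) (show (0:ℝ) ≤ c - u₀ x by linarith)
      have hu := hpos x
      simp only [hv]; nlinarith
  have hvle : ∀ x, v x ≤ u₀ x := by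
    intro x
    rcases le_or_gt b x with h | h
    · exact le_of_eq (hveq x h)
    · have h0 := hχnonneg x; have h1 := hχle1 x
      have hcx := hcb x h.le
      have := mul_nonneg (sub_nonneg.2 h1) (show (0:ℝ) ≤ u₀ x - c by linarith)
      simp only [hv]; nlinarith
  -- smoothness of v
  have hvC2 : ContDiff ℝ 2 v := by
    rw [contDiff_iff_contDiffAt]
    intro x
    rcases lt_or_ge x a with hx | hx
    · exact contDiffAt_const.congr_of_eventuallyEq
        (Filter.eventuallyEq_of_mem (Iio_mem_nhds hx) fun y hy => hvconst y (le_of_lt hy))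
    · have hx0 : ξ₀ < x := by rw [ha] at hx; linarith
      have hu : ContDiffAt ℝ 2 u₀ x := hC2.contDiffAt (Ici_mem_nhds hx0)
      exact contDiffAt_const.add (hχC2.contDiffAt.mul (hu.sub contDiffAt_const))
  have hvC1 : ContDiff ℝ 1 (deriv v) := by
    have h2 : ContDiff ℝ ((1:ℕ∞) + 1) v := by
      convert hvC2 using 2
      norm_num
    exact (contDiff_succ_iff_deriv.1 h2).2.2
  have hddc : Continuous (deriv (deriv v)) := hvC1.continuous_deriv le_rfl
  -- second derivative facts
  have hdd0 : ∀ x < a, deriv (deriv v) x = 0 := by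
    intro x hx
    have hev : v =ᶠ[nhds x] fun _ => c :=
      Filter.eventuallyEq_of_mem (Iio_mem_nhds hx) fun y hy => hvconst y (le_of_lt hy)
    have h1 : deriv v =ᶠ[nhds x] fun _ => (0:ℝ) :=
      hev.deriv.mono fun y hy => by rw [hy, deriv_const]
    rw [h1.deriv.eq_of_nhds, deriv_const]
  have hddu : ∀ x, b < x → deriv (deriv v) x = deriv (deriv u₀) x := by
    intro x hx
    have hev : v =ᶠ[nhds x] u₀ :=
      Filter.eventuallyEq_of_mem (Ioi_mem_nhds hx) fun y hy => hveq y (le_of_lt hy)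
    exact hev.deriv.deriv.eq_of_nhds
  -- uniform continuity of v
  have hχdiff : Differentiable ℝ χ := hχC2.differentiable (by norm_num)
  have hdχC : Continuous (deriv χ) := hχC2.continuous_deriv (by norm_num)
  have hdχ0 : ∀ y, y < a ∨ b < y → deriv χ y = 0 := by
    rintro y (hy | hy)
    · have hev : χ =ᶠ[nhds y] fun _ => (0:ℝ) :=
        Filter.eventuallyEq_of_mem (Iio_mem_nhds hy) fun z hz => hχ0 z (le_of_lt hz)
      rw [hev.deriv.eq_of_nhds, deriv_const]
    · have hev : χ =ᶠ[nhds y] fun _ => (1:ℝ) :=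
        Filter.eventuallyEq_of_mem (Ioi_mem_nhds hy) fun z hz => hχ1 z (le_of_lt hz)
      rw [hev.deriv.eq_of_nhds, deriv_const]
  obtain ⟨y₀, hy₀S, hy₀'⟩ := isCompact_Icc.exists_isMaxOn (Set.nonempty_Icc.2 hab.le)
    ((continuous_abs.comp hdχC).continuousOn)
  have hy₀ := isMaxOn_iff.1 hy₀'
  have hL : ∀ y, |deriv χ y| ≤ |deriv χ y₀| := by
    intro y
    rcases lt_or_ge y a with hy | hy
    · rw [hdχ0 y (Or.inl hy)]; simp [abs_nonneg]
    rcases le_or_gt y b with hy' | hy'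
    · exact hy₀ y ⟨hy, hy'⟩
    · rw [hdχ0 y (Or.inr hy')]; simp [abs_nonneg]
  have hχLip : LipschitzWith (Real.toNNReal |deriv χ y₀|) χ := by
    refine lipschitzWith_of_nnnorm_deriv_le hχdiff fun y => ?_
    rw [← NNReal.coe_le_coe, coe_nnnorm, Real.norm_eq_abs,
      Real.coe_toNNReal _ (abs_nonneg _)]
    exact hL y
  have hχUC : UniformContinuous χ := hχLip.uniformContinuous
  have hχbd : ∀ y, |χ y| ≤ 1 := fun y => by
    rw [abs_of_nonneg (hχnonneg y)]; exact hχle1 y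
  have husbd : ∀ y, |u₀ y - c| ≤ M + |c| := by
    intro y
    have h1 := abs_le.1 (hM y)
    have h2 := neg_abs_le c
    have h3 := le_abs_self c
    rw [abs_le]; constructor <;> linarith
  have hvUC : UniformContinuous v :=
    uniformContinuous_const.add
      (uc_mul_bdd hχUC (hUC.sub uniformContinuous_const) hχbd husbd)
  -- bound constant
  obtain ⟨x₁, hx₁S, hx₁'⟩ := isCompact_Icc.exists_isMaxOn
    (Set.nonempty_Icc.2 (show a - 1 ≤ b + 1 by linarith))
    ((continuous_abs.comp hddc).continuousOn)
  have hx₁ := isMaxOn_iff.1 hx₁'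
  obtain ⟨x₂, hx₂S, hx₂'⟩ := isCompact_Icc.exists_isMinOn
    (Set.nonempty_Icc.2 (show a - 1 ≤ b + 1 by linarith))
    (hvC2.continuous.continuousOn)
  have hx₂ := isMinOn_iff.1 hx₂'
  set K₁ : ℝ := |deriv (deriv v) x₁| / v x₂ with hK₁def
  have hK₁0 : 0 ≤ K₁ := div_nonneg (abs_nonneg _) (hvpos x₂).le
  set K : ℝ := max K₁ 1 with hKdef
  have hK0 : 0 ≤ K := le_trans hK₁0 (le_max_left _ _)
  have hK1 : 1 ≤ K := le_max_right _ _
  have hbound : ∀ x, |deriv (deriv v) x| ≤ K * v x := by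
    intro x
    rcases lt_or_ge x (a - 1) with hx | hx
    · rw [hdd0 x (by linarith)]
      simpa using mul_nonneg hK0 (hvpos x).le
    rcases le_or_gt x (b + 1) with hx' | hx'
    · calc |deriv (deriv v) x| ≤ |deriv (deriv v) x₁| := hx₁ x ⟨hx, hx'⟩
        _ = K₁ * v x₂ := (div_mul_cancel₀ _ (ne_of_gt (hvpos x₂))).symm
        _ ≤ K₁ * v x := mul_le_mul_of_nonneg_left (hx₂ x ⟨hx, hx'⟩) hK₁0
        _ ≤ K * v x := mul_le_mul_of_nonneg_right (le_max_left _ _) (hvpos x).le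
    · rw [hddu x (by linarith)]
      have h1 := hξ x (by linarith)
      rw [Real.norm_eq_abs, Real.norm_eq_abs, abs_of_pos (hpos x), one_mul] at h1
      calc |deriv (deriv u₀) x| ≤ u₀ x := h1
        _ = v x := (hveq x (by linarith)).symm
        _ ≤ K * v x := le_mul_of_one_le_left (hvpos x).le hK1
  -- eventual equalities at +∞
  have hev2 : v =ᶠ[Filter.atTop] u₀ :=
    Filter.eventually_atTop.2 ⟨b, fun x hx => hveq x hx⟩
  have hev1 : (fun x => deriv (deriv v) x) =ᶠ[Filter.atTop] fun x => deriv (deriv u₀) x :=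
    Filter.eventually_atTop.2 ⟨b + 1, fun x hx => hddu x (by linarith)⟩
  refine ⟨v, b, K, hK0, hvle, hveq, ⟨max c M, fun x => ?_⟩, hvUC, hvpos, ?_, ?_, ?_, ?_, hvC2,
    hbound⟩
  · -- boundedness
    have h0 := hχnonneg x; have h1 := hχle1 x
    have h2 := (abs_le.1 (hM x)).2
    have h3 : c ≤ max c M := le_max_left _ _
    have h4 : M ≤ max c M := le_max_right _ _
    rw [abs_of_pos (hvpos x)]
    simp only [hv]
    nlinarith
  · -- liminf at -∞
    have hevc : v =ᶠ[Filter.atBot] fun _ => c :=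
      Filter.eventually_atBot.2 ⟨a, fun x hx => hvconst x hx⟩
    rw [Filter.liminf_congr hevc, Filter.liminf_const]
    exact hc0
  · -- tendsto 0 at +∞
    exact (Filter.tendsto_congr' hev2).2 hlim
  · -- C² and antitone on a right half-line
    refine ⟨b, (hC2.mono (Set.Ici_subset_Ici.2 (by linarith))).congr fun y hy => hveq y hy,
      fun x hx y hy hxy => ?_⟩
    rw [hveq x hx, hveq y hy]
    exact hmono (Set.mem_Ici.2 (by linarith [Set.mem_Ici.1 hx]))
      (Set.mem_Ici.2 (by linarith [Set.mem_Ici.1 hy])) hxy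
  · -- little-o at +∞
    exact hoo.congr' hev1.symm hev2.symm
end
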